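/- (Additivity of noncommutative angles.) Let n ≥ 3. For any cyclic sequence (i₀,i₁,…,i_ℓ) of distinct elements of [n] with ℓ ≥ 2, one has in 𝒜_n the identity T_{i₀}^{i₁,i_ℓ} = T_{i₀}^{i₁,i₂} + T_{i₀}^{i₂,i₃} + ⋯ + T_{i₀}^{i_{ℓ−1},i_ℓ}. In particular, T_1^{2,n} = T_1^{2,3} + T_1^{3,4} + ⋯ + T_1^{n−1,n}. -/

import Mathlib

/-!
Multiplying the exchange relation `x_{jl} = x_{jk} x_{ik}⁻¹ x_{il} + x_{ji} x_{ki}⁻¹ x_{kl}` of a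
cyclic quadruple `(i, j, k, l)` by `x_{ji}⁻¹` on the left and by `x_{il}⁻¹` on the right gives
`T_i^{jl} = T_i^{jk} + T_i^{kl}`. Applied to `(i₀, i₁, i_{ℓ-1}, i_ℓ)`, this reduces the claim
for `(i₀, …, i_ℓ)` to the claim for its prefix `(i₀, …, i_{ℓ-1})`, which is again cyclic because
subsequences of cyclic sequences are cyclic.
-/

open scoped Classical

noncomputable section

namespace NCPolygon

/-- Cyclic successor on `Fin n` (the vertices of the `n`-gon in cyclic order). -/
def csucc {n : ℕ} (i : Fin n) : Fin n :=
  ⟨(i.1 + 1) % n, Nat.mod_lt _ (Nat.lt_of_le_of_lt (Nat.zero_le _) i.isLt)⟩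

/-- Cyclic predecessor on `Fin n`. -/
def cpred {n : ℕ} (i : Fin n) : Fin n :=
  ⟨(i.1 + (n - 1)) % n, Nat.mod_lt _ (Nat.lt_of_le_of_lt (Nat.zero_le _) i.isLt)⟩

/-- A list of elements of `Fin n` is *cyclic* if its entries are distinct and some
cyclic rotation of it is strictly increasing. -/
def IsCyclicSeq {n : ℕ} (l : List (Fin n)) : Prop :=
  l.Nodup ∧ ∃ k : ℕ, (l.rotate k).Pairwise (· < ·)

/-- The pair `(i,k)` crosses `(j,l)` iff `(i,j,k,l)` is cyclic. -/
def Crosses {n : ℕ} (p q : Fin n × Fin n) : Prop :=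
  IsCyclicSeq [p.1, q.1, p.2, q.2]

def NonCrossing {n : ℕ} (Δ : Set (Fin n × Fin n)) : Prop :=
  (∀ p ∈ Δ, p.1 ≠ p.2) ∧ ∀ p ∈ Δ, ∀ q ∈ Δ, ¬ Crosses p q

/-- A triangulation of the `n`-gon: a maximal crossing-free set of (directed) chords. -/
def IsTriangulation {n : ℕ} (Δ : Set (Fin n × Fin n)) : Prop :=
  NonCrossing Δ ∧ ∀ Δ' : Set (Fin n × Fin n), NonCrossing Δ' → Δ ⊆ Δ' → Δ' = Δ

/-! ### The noncommutative polygon algebra `𝒜_n` -/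

abbrev OffD (n : ℕ) := {p : Fin n × Fin n // p.1 ≠ p.2}

abbrev AGen (n : ℕ) := OffD n ⊕ OffD n

def xF {n : ℕ} (i j : Fin n) : FreeAlgebra ℚ (AGen n) :=
  if h : i ≠ j then FreeAlgebra.ι ℚ (Sum.inl ⟨(i, j), h⟩) else 1

def xiF {n : ℕ} (i j : Fin n) : FreeAlgebra ℚ (AGen n) :=
  if h : i ≠ j then FreeAlgebra.ι ℚ (Sum.inr ⟨(i, j), h⟩) else 1

/-- The defining relations of `𝒜_n`: invertibility, triangle, and exchange relations. -/
inductive ARel (n : ℕ) : FreeAlgebra ℚ (AGen n) → FreeAlgebra ℚ (AGen n) → Prop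
  | mul_inv {i j : Fin n} (h : i ≠ j) : ARel n (xF i j * xiF i j) 1
  | inv_mul {i j : Fin n} (h : i ≠ j) : ARel n (xiF i j * xF i j) 1
  | triangle {i j k : Fin n} (hij : i ≠ j) (hik : i ≠ k) (hjk : j ≠ k) :
      ARel n (xF i j * xiF k j * xF k i) (xF i k * xiF j k * xF j i)
  | exchange {i j k l : Fin n} (h : IsCyclicSeq [i, j, k, l]) :
      ARel n (xF j l) (xF j k * xiF i k * xF i l + xF j i * xiF k i * xF k l)

/-- The noncommutative `n`-gon algebra `𝒜_n`. -/
abbrev NCPoly (n : ℕ) := RingQuot (ARel n)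

/-- The generator `x_{ij} ∈ 𝒜_n` (junk value `1` when `i = j`). -/
def X {n : ℕ} (i j : Fin n) : NCPoly n :=
  RingQuot.mkAlgHom ℚ (ARel n) (xF i j)

/-- The generator `x_{ij}⁻¹ ∈ 𝒜_n`. -/
def Xinv {n : ℕ} (i j : Fin n) : NCPoly n :=
  RingQuot.mkAlgHom ℚ (ARel n) (xiF i j)

/-- The noncommutative angle `T_i^{jk} = x_{ji}⁻¹ x_{jk} x_{ik}⁻¹ ∈ 𝒜_n`. -/
def Tang {n : ℕ} (i j k : Fin n) : NCPoly n := Xinv j i * X j k * Xinv i k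

/-! ### Triangle groups -/

def tF {n : ℕ} (Δ : Set (Fin n × Fin n)) (i j : Fin n) : FreeGroup Δ :=
  if h : (i, j) ∈ Δ then FreeGroup.of (⟨(i, j), h⟩ : Δ) else 1

/-- The triangle relations of the triangle group `𝕋_Δ`. -/
def triRels {n : ℕ} (Δ : Set (Fin n × Fin n)) : Set (FreeGroup Δ) :=
  { w | ∃ i j k : Fin n, i ≠ j ∧ i ≠ k ∧ j ≠ k ∧
      (i, j) ∈ Δ ∧ (j, i) ∈ Δ ∧ (i, k) ∈ Δ ∧ (k, i) ∈ Δ ∧ (j, k) ∈ Δ ∧ (k, j) ∈ Δ ∧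
      w = tF Δ i j * (tF Δ k j)⁻¹ * tF Δ k i *
        (tF Δ i k * (tF Δ j k)⁻¹ * tF Δ j i)⁻¹ }

/-- The triangle group `𝕋_Δ` of a triangulation `Δ`. -/
abbrev TriGroup {n : ℕ} (Δ : Set (Fin n × Fin n)) := PresentedGroup (triRels Δ)

/-- The generator `t_{ij} ∈ 𝕋_Δ` (junk value `1` when `(i,j) ∉ Δ`). -/
def tG {n : ℕ} (Δ : Set (Fin n × Fin n)) (i j : Fin n) : TriGroup Δ :=
  if h : (i, j) ∈ Δ then PresentedGroup.of (rels := triRels Δ) ⟨(i, j), h⟩ else 1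

/-! ### The big triangle group `𝕋_n` -/

def btF {n : ℕ} (i j : Fin n) : FreeGroup (OffD n) :=
  if h : i ≠ j then FreeGroup.of (⟨(i, j), h⟩ : OffD n) else 1

def bigRels (n : ℕ) : Set (FreeGroup (OffD n)) :=
  { w | ∃ i j k : Fin n, i ≠ j ∧ i ≠ k ∧ j ≠ k ∧
      w = btF i j * (btF k j)⁻¹ * btF k i * (btF i k * (btF j k)⁻¹ * btF j i)⁻¹ }

/-- The big triangle group `𝕋_n`. -/
abbrev BigTriGroup (n : ℕ) := PresentedGroup (bigRels n)

/-- The generator `t_{ij} ∈ 𝕋_n`. -/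
def bigT {n : ℕ} (i j : Fin n) : BigTriGroup n :=
  if h : i ≠ j then PresentedGroup.of (rels := bigRels n) ⟨(i, j), h⟩ else 1

/-! ### Distinguished subalgebras and subgroups -/

/-- `𝒜_Δ`: the subalgebra of `𝒜_n` generated by all `x_{ij}` together with the
`x_{ij}⁻¹` for `(i,j) ∈ Δ`. -/
def ADelta (n : ℕ) (Δ : Set (Fin n × Fin n)) : Subalgebra ℚ (NCPoly n) :=
  Algebra.adjoin ℚ
    ({a | ∃ i j : Fin n, i ≠ j ∧ a = X i j} ∪ {a | ∃ p ∈ Δ, a = Xinv p.1 p.2})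

/-- `𝒬_n`: the subalgebra of `𝒜_n` generated by the `y_{ij}^k = x_{ki}⁻¹ x_{kj}`. -/
def Qn (n : ℕ) : Subalgebra ℚ (NCPoly n) :=
  Algebra.adjoin ℚ
    {a : NCPoly n | ∃ i j k : Fin n, i ≠ j ∧ i ≠ k ∧ j ≠ k ∧ a = Xinv k i * X k j}

/-- `𝕌_Δ`: the subgroup of `𝕋_Δ` generated by the `u_{ij}^k = t_{ki}⁻¹ t_{kj}`. -/
def UDelta {n : ℕ} (Δ : Set (Fin n × Fin n)) : Subgroup (TriGroup Δ) :=
  Subgroup.closure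
    {g | ∃ i j k : Fin n, (k, i) ∈ Δ ∧ (k, j) ∈ Δ ∧ g = (tG Δ k i)⁻¹ * tG Δ k j}

theorem _root_.List.ofFn_comp_sublist_ofFn {α : Type*} {m k : ℕ} (f : Fin k → α)
    {σ : Fin m → Fin k} (hσ : StrictMono σ) : (List.ofFn (f ∘ σ)).Sublist (List.ofFn f) := by
  have hσ_sub : (List.ofFn σ).Sublist (List.finRange k) :=
    List.sublist_of_subperm_of_pairwise
      ((List.nodup_ofFn.mpr hσ.injective).subperm fun x _ => List.mem_finRange x)
      hσ.sortedLT_ofFn.pairwise (List.pairwise_lt_finRange k)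
  rw [← List.map_ofFn, List.ofFn_eq_map (f := f)]
  exact hσ_sub.map f

theorem IsCyclicSeq.sublist {n : ℕ} {L L' : List (Fin n)} (h : IsCyclicSeq L)
    (hs : L'.Sublist L) : IsCyclicSeq L' := by
  obtain ⟨hnd, k, hk⟩ := h
  refine ⟨hnd.sublist hs, ?_⟩
  rw [List.rotate_eq_drop_append_take_mod] at hk
  set m := k % L.length
  -- `L' = a ++ b` with `a` from `take m L` and `b` from `drop m L`, so `b ++ a` is sorted
  obtain ⟨a, b, rfl, ha, hb⟩ :=
    List.sublist_append_iff.mp ((List.take_append_drop m L).symm ▸ hs)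
  refine ⟨a.length, ?_⟩
  rw [List.rotate_append_length_eq]
  exact hk.sublist (hb.append ha)

theorem IsCyclicSeq.comp_strictMono {n m k : ℕ} {f : Fin k → Fin n}
    (hf : IsCyclicSeq (List.ofFn f)) {σ : Fin m → Fin k} (hσ : StrictMono σ) :
    IsCyclicSeq (List.ofFn (f ∘ σ)) :=
  hf.sublist (List.ofFn_comp_sublist_ofFn f hσ)

theorem X_mul_Xinv {n : ℕ} {i j : Fin n} (h : i ≠ j) : X i j * Xinv i j = 1 := by
  simpa [X, Xinv] using RingQuot.mkAlgHom_rel ℚ (ARel.mul_inv h)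

theorem Xinv_mul_X {n : ℕ} {i j : Fin n} (h : i ≠ j) : Xinv i j * X i j = 1 := by
  simpa [X, Xinv] using RingQuot.mkAlgHom_rel ℚ (ARel.inv_mul h)

theorem X_exchange {n : ℕ} {i j k l : Fin n} (h : IsCyclicSeq [i, j, k, l]) :
    X j l = X j k * Xinv i k * X i l + X j i * Xinv k i * X k l := by
  simpa [X, Xinv] using RingQuot.mkAlgHom_rel ℚ (ARel.exchange h)

theorem Tang_eq_add_of_isCyclicSeq {n : ℕ} {i j k l : Fin n} (h : IsCyclicSeq [i, j, k, l]) :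
    Tang i j l = Tang i j k + Tang i k l := by
  have hij : i ≠ j := by have := h.1; aesop
  have hil : i ≠ l := by have := h.1; aesop
  calc Tang i j l
      = Xinv j i * X j k * Xinv i k * (X i l * Xinv i l)
        + (Xinv j i * X j i) * (Xinv k i * X k l * Xinv i l) := by
        rw [Tang, X_exchange h]; noncomm_ring
    _ = Tang i j k + Tang i k l := by
        rw [X_mul_Xinv hil, Xinv_mul_X hij.symm, mul_one, one_mul, Tang, Tang]

theorem angle_additivity_general (n : ℕ) (l : ℕ) (hl : 2 ≤ l)
    (f : Fin (l + 1) → Fin n) (hf : IsCyclicSeq (List.ofFn f)) :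
    Tang (f 0) (f 1) (f (Fin.last l)) =
      ∑ s ∈ Finset.univ.filter (fun s : Fin l => 1 ≤ (s : ℕ)),
        Tang (f 0) (f s.castSucc) (f s.succ) := by
  induction l, hl using Nat.le_induction with
  | base =>
    rw [show Finset.univ.filter (fun s : Fin 2 => 1 ≤ (s : ℕ)) = {1} by decide,
      Finset.sum_singleton]
    rfl
  | succ l hl ih =>
    have hquad : IsCyclicSeq [f 0, f 1, f (Fin.last l).castSucc, f (Fin.last (l + 1))] := by
      have h1 : (1 : Fin (l + 2)) < (Fin.last l).castSucc := by
        rw [Fin.lt_def, Fin.val_one, Fin.val_castSucc, Fin.val_last]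
        omega
      have hσ : StrictMono ![(0 : Fin (l + 2)), 1, (Fin.last l).castSucc, Fin.last (l + 1)] := by
        simpa [Fin.strictMono_iff_lt_succ, Fin.forall_fin_succ] using h1
      simpa using hf.comp_strictMono hσ
    have hprefix := ih (f ∘ Fin.castSucc) (hf.comp_strictMono Fin.strictMono_castSucc)
    have hcast_one : (1 : Fin (l + 1)).castSucc = 1 := Fin.ext (by simp; omega)
    simp only [Function.comp_apply, Fin.castSucc_zero, hcast_one] at hprefix
    rw [Tang_eq_add_of_isCyclicSeq hquad, hprefix, Finset.sum_filter, Finset.sum_filter,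
      Fin.sum_univ_castSucc, if_pos (by simp; omega), Fin.succ_last]
    simp only [Fin.val_castSucc, Fin.succ_castSucc]

/-- **Additivity of noncommutative angles.** For any cyclic sequence
`(i₀, i₁, …, i_ℓ)` of distinct vertices (`ℓ ≥ 2`),
`T_{i₀}^{i₁, i_ℓ} = Σ_{s=1}^{ℓ-1} T_{i₀}^{i_s, i_{s+1}}` in `𝒜_n`. -/
theorem angle_additivity (n : ℕ) (hn : 3 ≤ n) (l : ℕ) (hl : 2 ≤ l)
    (f : Fin (l + 1) → Fin n) (hf : IsCyclicSeq (List.ofFn f)) :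
    Tang (f 0) (f 1) (f (Fin.last l)) =
      ∑ s ∈ Finset.univ.filter (fun s : Fin l => 1 ≤ (s : ℕ)),
        Tang (f 0) (f s.castSucc) (f s.succ) :=
  angle_additivity_general n l hl f hf

end NCPolygon
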